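/- Let P(u,v) > 0 for all nearest-neighbor pairs u ∼ v in the grid E. Then the matrices P_1,...,P_m commute pairwise if and only if there exist positive constants a_u (u ∈ E) and W(u,v) (for u ∼ v) such that P(u,v) = a_u W(u,v) a_v^{-1}, where W(u',v') = W(u'',v'') whenever v' − u' ∈ {±e_k} for some k and (u'',v'') = (u'+w, v'+w) for some w in the sublattice spanned by {e_ℓ : ℓ ≠ k}, and W(u,v) = W(v,u). -/

import Mathlib

/-- Vertices of the grid `{0,…,n₁} × ⋯ × {0,…,n_m}`. -/
abbrev GridV (m : ℕ) (n : Fin m → ℕ) := ∀ k : Fin m, Fin (n k + 1)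

/-- `u` and `v` are nearest neighbors in direction `k`, i.e. `u - v ∈ {±e_k}`. -/
abbrev gridAdjDir {m : ℕ} {n : Fin m → ℕ} (k : Fin m) (u v : GridV m n) : Prop :=
  (∀ l, l ≠ k → u l = v l) ∧ ((u k : ℕ) + 1 = (v k : ℕ) ∨ (v k : ℕ) + 1 = (u k : ℕ))

/-- Nearest-neighbor relation `u ∼ v` on the grid. -/
abbrev gridAdj {m : ℕ} {n : Fin m → ℕ} (u v : GridV m n) : Prop :=
  ∃ k, gridAdjDir k u v

/-- The directional transition matrix `P_k`. -/
def dirMatrix {m : ℕ} (n : Fin m → ℕ) (P : GridV m n → GridV m n → ℝ) (k : Fin m) :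
    Matrix (GridV m n) (GridV m n) ℝ :=
  fun u v => if gridAdjDir k u v then P u v else 0

/-!
Work with `L = log P`. The entry `(P_i P_j)(u, w)` has a single term, so commutation says that `L`
has the same sum along the two sides of every unit square. Adding the four such identities of a
square shows that the symmetric part `L u v + L v u` is unchanged when an edge is translated across
a square, hence constant on classes of parallel edges; `W` is `exp` of half of it. The
antisymmetric part `L v u - L u v` is again closed on squares, so, the grid being simply connected,
it is the difference `f v - f u` of a potential, and `a = exp (f / 2)`. Conversely, under such a
parametrization the two paths around a square carry the same weight `a u * W * W' * (a w)⁻¹`.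
-/

section
variable {m : ℕ} {n : Fin m → ℕ}

namespace gridAdjDir

variable {k : Fin m} {u v : GridV m n}

lemma symm (h : gridAdjDir k u v) : gridAdjDir k v u :=
  ⟨fun l hl => (h.1 l hl).symm, h.2.symm⟩

lemma update_eq (h : gridAdjDir k u v) : Function.update u k (v k) = v := by
  funext l
  by_cases hl : l = k
  · subst hl; simp
  · rw [Function.update_of_ne hl, h.1 l hl]

lemma update_update_of_ne {j : Fin m} (h : gridAdjDir k u v) (hjk : j ≠ k) (t : Fin (n j + 1)) :
    gridAdjDir k (Function.update u j t) (Function.update v j t) := by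
  refine ⟨fun l hl => ?_, by simpa [Function.update_of_ne hjk.symm] using h.2⟩
  by_cases hlj : l = j
  · subst hlj; simp
  · simp [Function.update_of_ne hlj, h.1 l hl]

end gridAdjDir

lemma gridAdjDir_update_update {k : Fin m} (x : GridV m n) {a b : Fin (n k + 1)}
    (h : (a : ℕ) + 1 = b ∨ (b : ℕ) + 1 = a) :
    gridAdjDir k (Function.update x k a) (Function.update x k b) :=
  ⟨fun l hl => by simp [Function.update_of_ne hl], by simpa using h⟩

lemma gridAdjDir.eq_of_path {i j : Fin m} (hij : i ≠ j) {u v v' w : GridV m n}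
    (h₁ : gridAdjDir i u v) (h₂ : gridAdjDir j v w) (h₁' : gridAdjDir i u v')
    (h₂' : gridAdjDir j v' w) : v = v' := by
  funext l
  by_cases hl : l = i
  · subst hl; rw [h₂.1 l hij, h₂'.1 l hij]
  · rw [← h₁.1 l hl, h₁'.1 l hl]

lemma gridAdjDir.exists_swap_path {i j : Fin m} (hij : i ≠ j) {u v w : GridV m n}
    (h₁ : gridAdjDir i u v) (h₂ : gridAdjDir j v w) :
    ∃ v', gridAdjDir j u v' ∧ gridAdjDir i v' w := by
  refine ⟨Function.update u j (w j), ⟨fun l hl => ?_, ?_⟩, ⟨fun l hl => ?_, ?_⟩⟩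
  · rw [Function.update_of_ne hl]
  · rw [Function.update_self, h₁.1 j hij.symm]; exact h₂.2
  · by_cases hlj : l = j
    · subst hlj; rw [Function.update_self]
    · rw [Function.update_of_ne hlj, h₁.1 l hl, h₂.1 l hlj]
  · rw [Function.update_of_ne hij, ← h₂.1 i hij]; exact h₁.2

namespace GridV

theorem eq_of_forall_adj {α : Sort*} {F : GridV m n → α}
    (hF : ∀ x y, gridAdj x y → F x = F y) (x y : GridV m n) : F x = F y := by
  have hline : ∀ (x : GridV m n) j t, F x = F (Function.update x j t) := by
    intro x j t
    have hzero : ∀ t, F (Function.update x j 0) = F (Function.update x j t) := by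
      intro t
      induction t using Fin.induction with
      | zero => rfl
      | succ t ih => exact ih.trans (hF _ _ ⟨j, gridAdjDir_update_update x (Or.inl (by simp))⟩)
    rw [← hzero, hzero (x j), Function.update_eq_self]
  have hpiece : ∀ s : Finset (Fin m), F x = F (s.piecewise y x) := by
    intro s
    induction s using Finset.induction_on with
    | empty => rw [Finset.piecewise_empty]
    | insert j s _ ih => rw [Finset.piecewise_insert, ← hline, ih]
  simpa using hpiece Finset.univ

def height (v : GridV m n) : ℕ := ∑ l, (v l : ℕ)

lemma height_add_one {k : Fin m} {u v : GridV m n} (h : gridAdjDir k u v)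
    (hup : (u k : ℕ) + 1 = v k) : height u + 1 = height v := by
  rw [height, height, ← Finset.add_sum_erase _ _ (Finset.mem_univ k),
    ← Finset.add_sum_erase _ _ (Finset.mem_univ k),
    Finset.sum_congr rfl fun l hl => congrArg Fin.val (h.1 l (Finset.ne_of_mem_erase hl)), ← hup]
  ring

-- `v j - 1` wraps around in `Fin`; `lower v j` is only used where `v j ≠ 0`.
def lower (v : GridV m n) (j : Fin m) : GridV m n := Function.update v j (v j - 1)

lemma gridAdjDir_lower_of_ne_zero {v : GridV m n} {j : Fin m} (h : v j ≠ 0) :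
    gridAdjDir j (lower v j) v ∧ (lower v j j : ℕ) + 1 = v j := by
  have hval : ((v j - 1 : Fin (n j + 1)) : ℕ) + 1 = v j := by
    rw [Fin.coe_sub_one, if_neg h]
    have := Fin.val_ne_zero_iff.mpr h
    omega
  refine ⟨⟨fun l hl => Function.update_of_ne hl _ _, Or.inl ?_⟩, ?_⟩ <;> simpa [lower] using hval

lemma lower_eq {k : Fin m} {u v : GridV m n} (h : gridAdjDir k u v)
    (hup : (u k : ℕ) + 1 = v k) : lower v k = u := by
  have : v k - 1 = u k := by
    rw [← Fin.val_inj, Fin.coe_sub_one, if_neg (Fin.val_ne_zero_iff.mp (by omega))]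
    omega
  rw [lower, this, h.symm.update_eq]

lemma _root_.gridAdjDir.lower {j k : Fin m} {u v : GridV m n} (h : gridAdjDir k u v)
    (hjk : j ≠ k) : gridAdjDir k (lower u j) (lower v j) := by
  rw [GridV.lower, GridV.lower, h.1 j hjk]
  exact h.update_update_of_ne hjk _

def SquareClosed {G : Type*} [Add G] (ω : GridV m n → GridV m n → G) : Prop :=
  ∀ ⦃i j : Fin m⦄, i ≠ j → ∀ ⦃u v₁ v₂ w : GridV m n⦄, gridAdjDir i u v₁ → gridAdjDir j v₁ w →
    gridAdjDir j u v₂ → gridAdjDir i v₂ w → ω u v₁ + ω v₁ w = ω u v₂ + ω v₂ w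

-- Descends along an arbitrary direction with `v j ≠ 0`; closedness of `ω` makes the choice
-- irrelevant (`SquareClosed.potential_eq_add`).
noncomputable def potential {G : Type*} [AddCommGroup G] (ω : GridV m n → GridV m n → G)
    (v : GridV m n) : G :=
  if h : ∃ j, v j ≠ 0 then potential ω (lower v h.choose) + ω (lower v h.choose) v else 0
termination_by height v
decreasing_by
  obtain ⟨hadj, hup⟩ := gridAdjDir_lower_of_ne_zero h.choose_spec
  have := height_add_one hadj hup
  omega

namespace SquareClosed

variable {G : Type*} [AddCommGroup G] {ω : GridV m n → GridV m n → G}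

lemma potential_eq_add (hω : SquareClosed ω) {k : Fin m} {u v : GridV m n}
    (h : gridAdjDir k u v) (hup : (u k : ℕ) + 1 = v k) :
    potential ω v = potential ω u + ω u v := by
  induction hN : height v using Nat.strong_induction_on generalizing k u v with
  | _ N ih =>
  have hex : ∃ j, v j ≠ 0 := ⟨k, Fin.val_ne_zero_iff.mp (by omega)⟩
  rw [potential, dif_pos hex]
  have hj := hex.choose_spec
  generalize hex.choose = j at hj ⊢
  obtain ⟨hxv, hxv_up⟩ := gridAdjDir_lower_of_ne_zero hj
  by_cases hjk : j = k
  · rw [hjk, lower_eq h hup]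
  -- Lower both ends of the edge along `j` and close the square with corners `lower u j` and `v`.
  have huj : u j ≠ 0 := h.1 j hjk ▸ hj
  obtain ⟨hbu, hbu_up⟩ := gridAdjDir_lower_of_ne_zero huj
  have hbx := h.lower hjk
  have hbx_up : (lower u j k : ℕ) + 1 = lower v j k := by
    simpa [lower, Function.update_of_ne (Ne.symm hjk)] using hup
  rw [ih _ (by rw [← hN, ← height_add_one hxv hxv_up]; omega) hbx hbx_up rfl,
    ih _ (by rw [← hN, ← height_add_one h hup]; omega) hbu hbu_up rfl,
    add_assoc, add_assoc, hω hjk hbu h hbx hxv]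

theorem exists_potential (hω : SquareClosed ω)
    (hanti : ∀ u v, gridAdj u v → ω v u = -ω u v) :
    ∃ f : GridV m n → G, ∀ u v, gridAdj u v → ω u v = f v - f u := by
  refine ⟨potential ω, fun u v ⟨k, h⟩ => ?_⟩
  rcases h.2 with hup | hdown
  · rw [hω.potential_eq_add h hup, add_sub_cancel_left]
  · rw [hω.potential_eq_add h.symm hdown, hanti v u ⟨k, h.symm⟩, sub_add_cancel_left]

lemma sub_swap (hω : SquareClosed ω) : SquareClosed fun u v => ω v u - ω u v := by
  intro i j hij u v₁ v₂ w h₁ h₂ h₃ h₄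
  rw [sub_add_sub_comm, sub_add_sub_comm, hω hij h₁ h₂ h₃ h₄, add_comm (ω v₁ u),
    add_comm (ω v₂ u), hω hij h₄.symm h₃.symm h₂.symm h₁.symm]

variable {L : GridV m n → GridV m n → ℝ}

lemma add_swap_eq_of_translate (hL : SquareClosed L) {j k : Fin m} (hjk : j ≠ k)
    {u v u₂ v₂ : GridV m n} (huv : gridAdjDir k u v) (hu : gridAdjDir j u u₂)
    (hv : gridAdjDir j v v₂) (h₂ : gridAdjDir k u₂ v₂) :
    L u v + L v u = L u₂ v₂ + L v₂ u₂ := by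
  -- In the sum of the four corner identities of the square the `j`-edges cancel.
  have := hL hjk.symm huv hv hu h₂
  have := hL hjk hv.symm huv.symm h₂.symm hu.symm
  have := hL hjk.symm huv.symm hu hv h₂.symm
  have := hL hjk hu.symm huv h₂ hv.symm
  linarith

lemma add_swap_eq_of_parallel (hL : SquareClosed L) {k : Fin m} {u' v' u'' v'' : GridV m n}
    (h' : gridAdjDir k u' v') (h'' : gridAdjDir k u'' v'') (hu : u'' k = u' k)
    (hv : v'' k = v' k) : L u' v' + L v' u' = L u'' v'' + L v'' u'' := by
  let F : GridV m n → ℝ := fun x =>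
    L (Function.update x k (u' k)) (Function.update x k (v' k)) +
      L (Function.update x k (v' k)) (Function.update x k (u' k))
  have hF : ∀ x y, gridAdj x y → F x = F y := by
    rintro x y ⟨j, hxy⟩
    by_cases hjk : j = k
    · subst hjk
      rw [← hxy.update_eq]
      simp only [F, Function.update_idem]
    · exact hL.add_swap_eq_of_translate hjk (gridAdjDir_update_update x h'.2)
        (hxy.update_update_of_ne (Ne.symm hjk) _) (hxy.update_update_of_ne (Ne.symm hjk) _)
        (gridAdjDir_update_update y h'.2)
  have hFu' : F u' = L u' v' + L v' u' := by
    simp only [F, Function.update_eq_self, h'.update_eq]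
  have hFu'' : F u'' = L u'' v'' + L v'' u'' := by
    simp only [F, ← hu, ← hv, Function.update_eq_self, h''.update_eq]
  rw [← hFu', ← hFu'', eq_of_forall_adj hF]

end SquareClosed

end GridV

open GridV

variable (P : GridV m n → GridV m n → ℝ)

lemma dirMatrix_apply_mul_apply_eq_zero {i j : Fin m} {u v w : GridV m n}
    (h : ¬(gridAdjDir i u v ∧ gridAdjDir j v w)) :
    dirMatrix n P i u v * dirMatrix n P j v w = 0 := by
  simp only [dirMatrix]
  split_ifs with h₁ h₂
  · exact absurd ⟨h₁, h₂⟩ h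
  all_goals simp

lemma dirMatrix_mul_apply_of_adj {i j : Fin m} (hij : i ≠ j) {u v w : GridV m n}
    (h₁ : gridAdjDir i u v) (h₂ : gridAdjDir j v w) :
    (dirMatrix n P i * dirMatrix n P j) u w = P u v * P v w := by
  rw [Matrix.mul_apply, Finset.sum_eq_single v, dirMatrix, dirMatrix, if_pos h₁, if_pos h₂]
  · exact fun v' _ hv' => dirMatrix_apply_mul_apply_eq_zero P fun h' =>
      hv' (gridAdjDir.eq_of_path hij h₁ h₂ h'.1 h'.2).symm
  · simp

lemma dirMatrix_mul_apply_eq_zero {i j : Fin m} {u w : GridV m n}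
    (h : ¬∃ v, gridAdjDir i u v ∧ gridAdjDir j v w) :
    (dirMatrix n P i * dirMatrix n P j) u w = 0 :=
  Finset.sum_eq_zero fun v _ => dirMatrix_apply_mul_apply_eq_zero P fun hv => h ⟨v, hv⟩

variable {P}

lemma squareClosed_log_of_dirMatrix_commute (hpos : ∀ u v, gridAdj u v → 0 < P u v)
    (hc : ∀ i j, dirMatrix n P i * dirMatrix n P j = dirMatrix n P j * dirMatrix n P i) :
    SquareClosed fun u v => Real.log (P u v) := by
  intro i j hij u v₁ v₂ w h₁ h₂ h₃ h₄
  have key : P u v₁ * P v₁ w = P u v₂ * P v₂ w := by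
    rw [← dirMatrix_mul_apply_of_adj P hij h₁ h₂, hc, dirMatrix_mul_apply_of_adj P hij.symm h₃ h₄]
  have hpos' : ∀ k {x y}, gridAdjDir k x y → P x y ≠ 0 := fun k _ _ h => (hpos _ _ ⟨k, h⟩).ne'
  rw [← Real.log_mul (hpos' i h₁) (hpos' j h₂), ← Real.log_mul (hpos' j h₃) (hpos' i h₄), key]

lemma dirMatrix_commute_of_param {a : GridV m n → ℝ} {W : GridV m n → GridV m n → ℝ}
    (ha : ∀ u, a u ≠ 0)
    (hPW : ∀ u v, gridAdj u v → P u v = a u * W u v * (a v)⁻¹)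
    (hW : ∀ u' v' u'' v'' : GridV m n,
      (∃ k, gridAdjDir k u' v' ∧ gridAdjDir k u'' v'' ∧ u'' k = u' k ∧ v'' k = v' k) →
        W u' v' = W u'' v'')
    (i j : Fin m) : dirMatrix n P i * dirMatrix n P j = dirMatrix n P j * dirMatrix n P i := by
  rcases eq_or_ne i j with rfl | hij
  · rfl
  ext u w
  by_cases hpath : ∃ v, gridAdjDir i u v ∧ gridAdjDir j v w
  · obtain ⟨v, h₁, h₂⟩ := hpath
    obtain ⟨v', h₃, h₄⟩ := h₁.exists_swap_path hij h₂
    rw [dirMatrix_mul_apply_of_adj P hij h₁ h₂, dirMatrix_mul_apply_of_adj P hij.symm h₃ h₄,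
      hPW _ _ ⟨i, h₁⟩, hPW _ _ ⟨j, h₂⟩, hPW _ _ ⟨j, h₃⟩, hPW _ _ ⟨i, h₄⟩,
      hW u v v' w ⟨i, h₁, h₄, (h₃.1 i hij).symm, (h₂.1 i hij).symm⟩,
      hW v w u v' ⟨j, h₂, h₃, h₁.1 j hij.symm, h₄.1 j hij.symm⟩]
    field_simp [ha v, ha v']
  · have hpath' : ¬∃ v, gridAdjDir j u v ∧ gridAdjDir i v w :=
      fun ⟨_, h₃, h₄⟩ => hpath (h₃.exists_swap_path hij.symm h₄)
    rw [dirMatrix_mul_apply_eq_zero P hpath, dirMatrix_mul_apply_eq_zero P hpath']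

end

/-- **Theorem 3.1.** For strictly positive nearest-neighbor transition
probabilities, the directional matrices commute pairwise iff
`P(u,v) = a_u W(u,v) a_v⁻¹` for positive constants `a_u`, `W(u,v)`, where `W` is symmetric
and takes equal values on parallel edges (edges in direction `e_k` at the same height,
shifted by any `w ∈ ∑_{ℓ≠k} ℤ e_ℓ`). -/
theorem commute_iff_param {m : ℕ} (n : Fin m → ℕ)
    (P : GridV m n → GridV m n → ℝ)
    (hpos : ∀ u v, gridAdj u v → 0 < P u v) :
    (∀ i j : Fin m,
      dirMatrix n P i * dirMatrix n P j = dirMatrix n P j * dirMatrix n P i) ↔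
    ∃ (a : GridV m n → ℝ) (W : GridV m n → GridV m n → ℝ),
      (∀ u, 0 < a u) ∧
      (∀ u v, gridAdj u v → 0 < W u v) ∧
      (∀ u v, gridAdj u v → P u v = a u * W u v * (a v)⁻¹) ∧
      (∀ u v, gridAdj u v → W u v = W v u) ∧
      (∀ u' v' u'' v'' : GridV m n,
        (∃ k, gridAdjDir k u' v' ∧ gridAdjDir k u'' v'' ∧
          u'' k = u' k ∧ v'' k = v' k) → W u' v' = W u'' v'') := by
  constructor
  · intro hc
    have hL := squareClosed_log_of_dirMatrix_commute hpos hc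
    obtain ⟨f, hf⟩ := hL.sub_swap.exists_potential fun u v _ => (neg_sub _ _).symm
    refine ⟨fun u => Real.exp (f u / 2),
      fun u v => Real.exp ((Real.log (P u v) + Real.log (P v u)) / 2),
      fun u => Real.exp_pos _, fun _ _ _ => Real.exp_pos _, fun u v huv => ?_,
      fun u v _ => by dsimp only; rw [add_comm], ?_⟩
    · have := hf u v huv
      dsimp only
      conv_lhs => rw [← Real.exp_log (hpos u v huv)]
      rw [← Real.exp_neg, ← Real.exp_add, ← Real.exp_add]
      congr 1
      linarith
    · rintro u' v' u'' v'' ⟨k, h', h'', hk, hk'⟩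
      dsimp only
      rw [hL.add_swap_eq_of_parallel h' h'' hk hk']
  · rintro ⟨a, W, ha, -, hPW, -, hW⟩
    exact dirMatrix_commute_of_param (fun u => (ha u).ne') hPW hW
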